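/- Let g_N be a taming function with ν = 1. There exists a constant C_N ≥ 0, depending only on g_N, such that for every smooth ℤ³-periodic divergence-free vector field u : ℝ³ → ℝ³, ∫_{[0,1]³} ⟨Δu(x) − ((u·∇)u)(x) − g_N(|u(x)|²)u(x), u(x) − Δu(x)⟩ dx ≤ −(1/2)‖u‖_{H²}² − (1/2)∫_{[0,1]³} |u(x)|² |∇u(x)|² dx + C_N ∫_{[0,1]³} |∇u(x)|² dx + ‖u‖_{L²}². (This is the H¹-energy estimate ⟨F(u), u⟩_{H¹} ≤ −½‖u‖²_{H²} − ½‖|u|·|∇u|‖²_{L²} + C_N‖∇u‖²_{L²} + ‖u‖²_{L²}.) -/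

import Mathlib

open MeasureTheory

noncomputable section

/-- Vector fields on `ℝ³` with values in `ℝ³`. -/
abbrev V3 := Fin 3 → ℝ

/-- `ℤ³`-periodicity: `u (x + k) = u x` for every integer vector `k`. -/
def IsPeriodic (u : V3 → V3) : Prop :=
  ∀ (x : V3) (k : Fin 3 → ℤ), u (x + fun i => (k i : ℝ)) = u x

/-- The `i`-th partial derivative `∂ᵢ u` at `x`. -/
def pd (u : V3 → V3) (i : Fin 3) (x : V3) : V3 :=
  fderiv ℝ u x (Pi.single i 1)

/-- Divergence-free condition `∑ᵢ ∂ᵢ uⁱ = 0`. -/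
def IsDivFree (u : V3 → V3) : Prop :=
  ∀ x : V3, ∑ i : Fin 3, pd u i x i = 0

/-- The Laplacian `Δu = ∑ᵢ ∂ᵢ∂ᵢ u`. -/
def lap (u : V3 → V3) (x : V3) : V3 :=
  ∑ i : Fin 3, fderiv ℝ (pd u i) x (Pi.single i 1)

/-- The convection term `(u·∇)v = ∑ᵢ uⁱ ∂ᵢ v`. -/
def conv (u v : V3 → V3) (x : V3) : V3 :=
  ∑ i : Fin 3, u x i • pd v i x

/-- Euclidean inner product on `ℝ³`. -/
def dot (a b : V3) : ℝ := ∑ j : Fin 3, a j * b j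

/-- Squared Euclidean norm on `ℝ³`. -/
def normSq (a : V3) : ℝ := ∑ j : Fin 3, (a j) ^ 2

/-- The periodicity cell `[0,1]³`. -/
def cube : Set V3 := Set.Icc 0 1

/-- `‖u‖²_{L²} = ∫_{[0,1]³} |u|² dx`. -/
def l2sq (u : V3 → V3) : ℝ := ∫ x in cube, normSq (u x)

/-- `|∇u(x)|² = ∑_{i,j} |∂ᵢ uʲ(x)|²`. -/
def gradSq (u : V3 → V3) (x : V3) : ℝ := ∑ i : Fin 3, normSq (pd u i x)

/-- `‖u‖²_{H¹} = ∫_{[0,1]³} (|u|² + |∇u|²) dx`. -/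
def h1sq (u : V3 → V3) : ℝ := ∫ x in cube, (normSq (u x) + gradSq u x)

/-- `‖u‖²_{H²} = ∫_{[0,1]³} |u - Δu|² dx`. -/
def h2sq (u : V3 → V3) : ℝ := ∫ x in cube, normSq (u x - lap u x)

/-- A taming function with `ν = 1`: a smooth `g : ℝ → ℝ` vanishing on `(-∞, N]`,
equal to `r - N` on `[N+1, ∞)`, with derivative between `0` and some `C₀ > 0`. -/
def IsTaming (N : ℝ) (g : ℝ → ℝ) : Prop :=
  ContDiff ℝ (⊤ : ℕ∞) g ∧ (∀ r ≤ N, g r = 0) ∧ (∀ r, N + 1 ≤ r → g r = r - N) ∧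
    ∃ C₀ > 0, ∀ r, 0 ≤ deriv g r ∧ deriv g r ≤ C₀

end

/-!
Expanding `⟨F(u), u - Δu⟩` pointwise and bounding `⟨(u·∇)u, Δu⟩ ≤ ½|u|²|∇u|² + ½|Δu|²` leaves
two terms without a pointwise bound, `-⟨(u·∇)u, u⟩` and `g(|u|²)⟨u, Δu⟩`. Both are divergences up to
terms of a good sign: `2⟨(u·∇)u, u⟩ = ∑ᵢ ∂ᵢ(uⁱ|u|²)` because `u` is divergence-free, and
`g(|u|²)⟨u, Δu⟩ = ∑ᵢ ∂ᵢ(g(|u|²)⟨u, ∂ᵢu⟩) - 2g'(|u|²) ∑ᵢ ⟨u, ∂ᵢu⟩² - g(|u|²)|∇u|²`.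
Divergences of periodic fields integrate to zero over the cell, `g' ≥ 0`, and `g(r) ≥ r - (N + 1)`
turns `-g(|u|²)|∇u|²` into `-|u|²|∇u|² + (N + 1)|∇u|²`, which absorbs the `½|u|²|∇u|²` above.
-/

section Divergence

variable {n : ℕ} {E : Type*} [NormedAddCommGroup E] [NormedSpace ℝ E]

noncomputable def divergence (Φ : Fin n → (Fin n → ℝ) → E) (x : Fin n → ℝ) : E :=
  ∑ i, fderiv ℝ (Φ i) x (Pi.single i 1)

theorem continuous_divergence {Φ : Fin n → (Fin n → ℝ) → E} (hΦ : ∀ i, ContDiff ℝ 1 (Φ i)) :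
    Continuous (divergence Φ) :=
  continuous_finsetSum _ fun i _ =>
    ((hΦ i).continuous_fderiv one_ne_zero).clm_apply continuous_const

theorem Fin.insertNth_one_eq_insertNth_zero_add_single (i : Fin (n + 1)) (y : Fin n → ℝ) :
    (Fin.insertNth i 1 y : Fin (n + 1) → ℝ) = Fin.insertNth i 0 y + Pi.single i 1 := by
  funext j
  refine Fin.succAboveCases i ?_ ?_ j <;> simp

/-- The opposite faces of the unit cube in direction `i` differ by `Pi.single i 1`, so their
contributions cancel in the divergence theorem. -/
theorem integral_divergence_eq_zero_of_periodic [CompleteSpace E]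
    {Φ : Fin (n + 1) → (Fin (n + 1) → ℝ) → E} (hΦ : ∀ i, ContDiff ℝ 1 (Φ i))
    (hper : ∀ i, Function.Periodic (Φ i) (Pi.single i 1)) :
    ∫ x in Set.Icc 0 1, divergence Φ x = 0 := by
  simp only [divergence]
  rw [integral_divergence_of_hasFDerivAt_off_countable' 0 1 zero_le_one Φ
    (fun i x => fderiv ℝ (Φ i) x) ∅ Set.countable_empty
    (fun i => (hΦ i).continuous.continuousOn)
    (fun x _ i => ((hΦ i).differentiable one_ne_zero x).hasFDerivAt)
    (continuous_divergence hΦ).integrableOn_Icc]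
  refine Finset.sum_eq_zero fun i _ => sub_eq_zero.2 <| setIntegral_congr_fun
    measurableSet_Icc fun y _ => ?_
  simp only [Pi.one_apply, Pi.zero_apply, Fin.insertNth_one_eq_insertNth_zero_add_single, hper i _]

end Divergence

theorem Function.Periodic.fderiv {E F : Type*} [NormedAddCommGroup E] [NormedSpace ℝ E]
    [NormedAddCommGroup F] [NormedSpace ℝ F] {f : E → F} {c : E} (h : Function.Periodic f c) :
    Function.Periodic (fderiv ℝ f) c := fun x => by
  rw [← fderiv_comp_add_right]
  exact congrArg (_root_.fderiv ℝ · x) (funext h)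

theorem Function.Periodic.pd {u : V3 → V3} {c : V3} (h : Function.Periodic u c) (i : Fin 3) :
    Function.Periodic (pd u i) c := fun x => by
  simp only [_root_.pd, h.fderiv x]

theorem IsPeriodic.periodic_single {u : V3 → V3} (hu : IsPeriodic u) (i : Fin 3) :
    Function.Periodic u (Pi.single i 1) := fun x => by
  have hcast : (Pi.single i 1 : V3) = fun j => ((Pi.single i 1 : Fin 3 → ℤ) j : ℝ) := by
    ext j
    simp [Pi.single_apply]
  rw [hcast]
  exact hu x _

theorem ContDiff.pd {n : WithTop ℕ∞} {u : V3 → V3} (hu : ContDiff ℝ (n + 1) u) (i : Fin 3) :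
    ContDiff ℝ n (pd u i) :=
  (hu.fderiv_right le_rfl).clm_apply contDiff_const

theorem dot_comm (a b : V3) : dot a b = dot b a := by
  simp only [dot, mul_comm]

theorem dot_self (a : V3) : dot a a = normSq a := by
  simp only [dot, normSq, sq]

theorem normSq_nonneg (a : V3) : 0 ≤ normSq a :=
  Finset.sum_nonneg fun j _ => sq_nonneg (a j)

theorem gradSq_nonneg (u : V3 → V3) (x : V3) : 0 ≤ gradSq u x :=
  Finset.sum_nonneg fun i _ => normSq_nonneg (pd u i x)

theorem normSq_sub (a b : V3) : normSq (a - b) = normSq a - 2 * dot a b + normSq b := by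
  simp only [normSq, dot, Fin.sum_univ_three, Pi.sub_apply]
  ring

theorem two_mul_dot_le (a b : V3) : 2 * dot a b ≤ normSq a + normSq b := by
  linarith [normSq_sub a b, normSq_nonneg (a - b)]

theorem normSq_sum_smul_le (a : V3) (v : Fin 3 → V3) :
    normSq (∑ i, a i • v i) ≤ normSq a * ∑ i, normSq (v i) := by
  calc normSq (∑ i, a i • v i) = ∑ j, (∑ i, a i * v i j) ^ 2 := by simp [normSq]
    _ ≤ ∑ j, normSq a * ∑ i, v i j ^ 2 :=
      Finset.sum_le_sum fun j _ => Finset.sum_mul_sq_le_sq_mul_sq _ _ _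
    _ = normSq a * ∑ i, normSq (v i) := by
      rw [← Finset.mul_sum, Finset.sum_comm]
      rfl

theorem normSq_conv_self_le (u : V3 → V3) (x : V3) :
    normSq (conv u u x) ≤ normSq (u x) * gradSq u x :=
  normSq_sum_smul_le (u x) fun i => pd u i x

section Calculus

variable {E : Type*} [NormedAddCommGroup E] [NormedSpace ℝ E] {f h : E → V3} {x : E}

theorem fderiv_dot_apply (hf : DifferentiableAt ℝ f x) (hh : DifferentiableAt ℝ h x) (v : E) :
    fderiv ℝ (fun y => dot (f y) (h y)) x v =
      dot (fderiv ℝ f x v) (h x) + dot (f x) (fderiv ℝ h x v) := by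
  have hf' : ∀ j, DifferentiableAt ℝ (fun y => f y j) x := fun j => by fun_prop
  have hh' : ∀ j, DifferentiableAt ℝ (fun y => h y j) x := fun j => by fun_prop
  simp only [dot]
  rw [fderiv_fun_sum (A := fun j y => f y j * h y j) fun j _ => (hf' j).mul (hh' j)]
  simp [fderiv_fun_mul (hf' _) (hh' _), fderiv_apply hf, fderiv_apply hh, ← Finset.sum_add_distrib,
    mul_comm, add_comm]

theorem fderiv_normSq_apply (hf : DifferentiableAt ℝ f x) (v : E) :
    fderiv ℝ (fun y => normSq (f y)) x v = 2 * dot (f x) (fderiv ℝ f x v) := by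
  simp only [← dot_self]
  rw [fderiv_dot_apply hf hf, dot_comm]
  ring

end Calculus

namespace IsTaming

variable {N : ℝ} {g : ℝ → ℝ}

theorem monotone (hg : IsTaming N g) : Monotone g := by
  obtain ⟨hsmooth, -, -, _, -, hderiv⟩ := hg
  exact monotone_of_deriv_nonneg (hsmooth.differentiable (by simp)) fun r => (hderiv r).1

theorem nonneg (hg : IsTaming N g) (r : ℝ) : 0 ≤ g r := by
  rcases le_total r N with h | h
  · exact (hg.2.1 r h).ge
  · exact (hg.2.1 N le_rfl).ge.trans (hg.monotone h)

theorem sub_le (hg : IsTaming N g) (r : ℝ) : r - (N + 1) ≤ g r := by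
  rcases le_total r (N + 1) with h | h
  · linarith [hg.nonneg r]
  · linarith [hg.2.2.1 r h]

end IsTaming

noncomputable def tamedDrift (g : ℝ → ℝ) (u : V3 → V3) (x : V3) : V3 :=
  lap u x - conv u u x - g (normSq (u x)) • u x

noncomputable def convFlux (u : V3 → V3) (i : Fin 3) (y : V3) : ℝ :=
  u y i * normSq (u y)

noncomputable def tamingFlux (g : ℝ → ℝ) (u : V3 → V3) (i : Fin 3) (y : V3) : ℝ :=
  g (normSq (u y)) * dot (u y) (pd u i y)

theorem Function.Periodic.convFlux {u : V3 → V3} {c : V3} (h : Function.Periodic u c)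
    (i : Fin 3) : Function.Periodic (convFlux u i) c := fun x => by
  simp only [_root_.convFlux, h x]

theorem Function.Periodic.tamingFlux {u : V3 → V3} {c : V3} (h : Function.Periodic u c)
    (g : ℝ → ℝ) (i : Fin 3) : Function.Periodic (tamingFlux g u i) c := fun x => by
  simp only [_root_.tamingFlux, h x, h.pd i x]

theorem contDiff_convFlux {u : V3 → V3} (hu : ContDiff ℝ 1 u) (i : Fin 3) :
    ContDiff ℝ 1 (convFlux u i) := by
  unfold convFlux normSq
  fun_prop

theorem contDiff_tamingFlux {g : ℝ → ℝ} {u : V3 → V3} (hg : ContDiff ℝ 1 g)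
    (hu : ContDiff ℝ 2 u) (i : Fin 3) : ContDiff ℝ 1 (tamingFlux g u i) := by
  have hu1 : ContDiff ℝ 1 u := hu.of_le (by norm_num)
  have hpd : ContDiff ℝ 1 (pd u i) := hu.pd i
  unfold tamingFlux dot normSq
  fun_prop

theorem divergence_convFlux {u : V3 → V3} {x : V3} (hu : DifferentiableAt ℝ u x)
    (hdiv : ∑ i, pd u i x i = 0) :
    divergence (convFlux u) x = 2 * dot (conv u u x) (u x) := by
  have hnormSq : DifferentiableAt ℝ (fun y => normSq (u y)) x := by
    simp only [normSq]
    fun_prop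
  have hcoord : ∀ i, DifferentiableAt ℝ (fun y => u y i) x := fun i => by fun_prop
  unfold divergence convFlux
  simp only [fderiv_fun_mul (hcoord _) hnormSq, fderiv_apply hu]
  simp only [pd, Fin.sum_univ_three, add_apply, smul_apply, fderiv_normSq_apply hu, dot,
    smul_eq_mul, ContinuousLinearMap.comp_apply, ContinuousLinearMap.proj_apply, conv,
    Finset.sum_apply, Pi.smul_apply] at hdiv ⊢
  linear_combination (normSq (u x)) * hdiv

theorem divergence_tamingFlux {g : ℝ → ℝ} {u : V3 → V3} {x : V3}
    (hg : DifferentiableAt ℝ g (normSq (u x))) (hu : DifferentiableAt ℝ u x)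
    (hpd : ∀ i, DifferentiableAt ℝ (pd u i) x) :
    divergence (tamingFlux g u) x =
      2 * deriv g (normSq (u x)) * ∑ i, dot (u x) (pd u i x) ^ 2 +
        g (normSq (u x)) * (gradSq u x + dot (u x) (lap u x)) := by
  have hnormSq : DifferentiableAt ℝ (fun y => normSq (u y)) x := by
    simp only [normSq]
    fun_prop
  have hgnormSq : HasFDerivAt (fun y => g (normSq (u y)))
      (deriv g (normSq (u x)) • fderiv ℝ (fun y => normSq (u y)) x) x :=
    hg.hasDerivAt.comp_hasFDerivAt x hnormSq.hasFDerivAt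
  have hterm : ∀ i, fderiv ℝ (tamingFlux g u i) x (Pi.single i 1) =
      2 * deriv g (normSq (u x)) * dot (u x) (pd u i x) ^ 2 +
        g (normSq (u x)) * (normSq (pd u i x) + dot (u x) (fderiv ℝ (pd u i) x (Pi.single i 1))) :=
    fun i => by
      have hdot : DifferentiableAt ℝ (fun y => dot (u y) (pd u i y)) x := by
        have := hpd i
        simp only [dot]
        fun_prop
      unfold tamingFlux
      rw [fderiv_fun_mul hgnormSq.differentiableAt hdot, hgnormSq.fderiv]
      simp only [add_apply, smul_apply, smul_eq_mul, fderiv_normSq_apply hu,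
        fderiv_dot_apply hu (hpd i)]
      rw [← dot_self (pd u i x)]
      simp only [pd]
      ring
  simp only [divergence, hterm]
  simp only [gradSq, lap, dot, Fin.sum_univ_three, Finset.sum_apply]
  ring

theorem dot_sub_sub_smul_le {u Δ c : V3} {G γ K : ℝ} (hc : normSq c ≤ normSq u * G)
    (hG : 0 ≤ G) (hγ : 0 ≤ γ) (hγK : normSq u - K ≤ γ) :
    dot (Δ - c - γ • u) (u - Δ) + dot c u - γ * (G + dot u Δ) ≤
      -(1/2) * normSq (u - Δ) - 1/2 * (normSq u * G) + K * G + normSq u := by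
  have hexpand : dot (Δ - c - γ • u) (u - Δ) =
      dot u Δ - normSq Δ - dot c u + dot c Δ - γ * normSq u + γ * dot u Δ := by
    simp only [dot, normSq, Fin.sum_univ_three, Pi.sub_apply, Pi.smul_apply, smul_eq_mul]
    ring
  nlinarith [normSq_sub u Δ, two_mul_dot_le c Δ, mul_nonneg hγ (normSq_nonneg u),
    mul_nonneg (sub_nonneg.2 hγK) hG, normSq_nonneg u]

theorem dot_tamedDrift_le {g : ℝ → ℝ} {K : ℝ} {u : V3 → V3} {x : V3}
    (hg : DifferentiableAt ℝ g (normSq (u x))) (hmono : Monotone g) (hg0 : ∀ r, 0 ≤ g r)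
    (hgK : ∀ r, r - K ≤ g r) (hu : DifferentiableAt ℝ u x)
    (hpd : ∀ i, DifferentiableAt ℝ (pd u i) x) (hdiv : ∑ i, pd u i x i = 0) :
    dot (tamedDrift g u x) (u x - lap u x) ≤
      -(1/2) * normSq (u x - lap u x) - 1/2 * (normSq (u x) * gradSq u x) +
        K * gradSq u x + normSq (u x) +
        (divergence (tamingFlux g u) x - divergence (convFlux u) x / 2) := by
  rw [tamedDrift, divergence_tamingFlux hg hu hpd, divergence_convFlux hu hdiv]
  have hderiv : 0 ≤ 2 * deriv g (normSq (u x)) * ∑ i, dot (u x) (pd u i x) ^ 2 :=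
    mul_nonneg (mul_nonneg zero_le_two hmono.deriv_nonneg)
      (Finset.sum_nonneg fun i _ => sq_nonneg _)
  linarith [dot_sub_sub_smul_le (Δ := lap u x) (normSq_conv_self_le u x) (gradSq_nonneg u x)
    (hg0 _) (hgK _)]

theorem integral_dot_tamedDrift_le {g : ℝ → ℝ} {K : ℝ} (hg : ContDiff ℝ 1 g) (hmono : Monotone g)
    (hg0 : ∀ r, 0 ≤ g r) (hgK : ∀ r, r - K ≤ g r) {u : V3 → V3} (hu : ContDiff ℝ 2 u)
    (hper : IsPeriodic u) (hdiv : IsDivFree u) :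
    (∫ x in cube, dot (tamedDrift g u x) (u x - lap u x)) ≤
      -(1/2) * h2sq u - (1/2) * (∫ x in cube, normSq (u x) * gradSq u x) +
        K * (∫ x in cube, gradSq u x) + l2sq u := by
  have hpd : ∀ i, ContDiff ℝ 1 (pd u i) := hu.pd
  have hint : ∀ {f : V3 → ℝ}, Continuous f → IntegrableOn f cube := fun hf => hf.integrableOn_Icc
  have hcu : Continuous u := hu.continuous
  have hcpd : ∀ i, Continuous (pd u i) := fun i => (hpd i).continuous
  have hclap : Continuous (lap u) := continuous_divergence hpd
  have hR : IntegrableOn (fun x => -(1/2) * normSq (u x - lap u x) -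
      1/2 * (normSq (u x) * gradSq u x) + K * gradSq u x + normSq (u x)) cube :=
    hint (by unfold gradSq normSq; fun_prop)
  have htaming := hint (continuous_divergence (contDiff_tamingFlux hg hu))
  have hconv := hint (continuous_divergence (contDiff_convFlux (hu.of_le (by norm_num))))
  have htaming_zero : ∫ x in cube, divergence (tamingFlux g u) x = 0 :=
    integral_divergence_eq_zero_of_periodic (contDiff_tamingFlux hg hu)
      fun i => (hper.periodic_single i).tamingFlux g i
  have hconv_zero : ∫ x in cube, divergence (convFlux u) x = 0 :=
    integral_divergence_eq_zero_of_periodic (contDiff_convFlux (hu.of_le (by norm_num)))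
      fun i => (hper.periodic_single i).convFlux i
  have hflux : IntegrableOn
      (fun x => divergence (tamingFlux g u) x - divergence (convFlux u) x / 2) cube :=
    htaming.sub (hconv.div_const 2)
  calc _ ≤ ∫ x in cube, (-(1/2) * normSq (u x - lap u x) - 1/2 * (normSq (u x) * gradSq u x) +
        K * gradSq u x + normSq (u x) +
        (divergence (tamingFlux g u) x - divergence (convFlux u) x / 2)) :=
        setIntegral_mono (hint (by unfold tamedDrift dot conv normSq; fun_prop))
          (hR.add hflux) fun x => dot_tamedDrift_le
            ((hg.differentiable one_ne_zero) _) hmono hg0 hgK ((hu.differentiable (by simp)) x)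
            (fun i => (hpd i).differentiable one_ne_zero x) (hdiv x)
    _ = _ := by
      rw [integral_add hR hflux, integral_sub htaming (hconv.div_const 2), integral_div,
        htaming_zero, hconv_zero, integral_add, integral_add, integral_sub, integral_const_mul,
        integral_const_mul, integral_const_mul]
      · simp only [h2sq, l2sq]
        ring
      all_goals exact hint (by simp only [gradSq, normSq]; fun_prop)

/-- `H¹`-energy estimate for the tamed Navier–Stokes drift `F(u) = Δu - (u·∇)u - g_N(|u|²)u`:
`⟨F(u), u⟩_{H¹} ≤ -½‖u‖²_{H²} - ½‖|u|·|∇u|‖²_{L²} + C_N‖∇u‖²_{L²} + ‖u‖²_{L²}`. -/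
theorem tamed_drift_H1_energy_estimate (N : ℝ) (gN : ℝ → ℝ) (hg : IsTaming N gN) :
    ∃ C_N : ℝ, 0 ≤ C_N ∧ ∀ u : V3 → V3, ContDiff ℝ (⊤ : ℕ∞) u → IsPeriodic u → IsDivFree u →
      (∫ x in cube,
          dot (lap u x - conv u u x - gN (normSq (u x)) • u x) (u x - lap u x)) ≤
        -(1/2) * h2sq u - (1/2) * (∫ x in cube, normSq (u x) * gradSq u x) +
          C_N * (∫ x in cube, gradSq u x) + l2sq u := by
  refine ⟨max 0 (N + 1), le_max_left _ _, fun u hu hper hdiv => ?_⟩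
  have hgK : ∀ r, r - max 0 (N + 1) ≤ gN r := fun r =>
    (sub_le_sub_left (le_max_right _ _) r).trans (hg.sub_le r)
  exact integral_dot_tamedDrift_le (hg.1.of_le (WithTop.coe_le_coe.2 le_top)) hg.monotone
    hg.nonneg hgK (hu.of_le (WithTop.coe_le_coe.2 le_top)) hper hdiv
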